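/- For every integer n ≥ 2, the sequence q ↦ t_q of degeneracy instants of the canonical variation on SO(2n+1)/Tⁿ, where t_q is the unique t ∈ (0, b_B(n)] with scal_B(n,t)/(2n²−1) = q(q+2n−1)/(2(2n−1)), is strictly decreasing in q and tends to 0 as q → ∞. -/
import Mathlib


/-- Scalar curvature of the canonical variation `h_t` of the normal homogeneous
metric on the full flag manifold `SO(2n+1)/Tⁿ`. -/
noncomputable def scalB (n : ℕ) (t : ℝ) : ℝ :=
  (5 * n ^ 3 - 2 * n ^ 2 * t ^ 4 + 8 * n ^ 2 * t ^ 2 - 7 * n ^ 2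
    + 2 * n * t ^ 4 - 4 * n * t ^ 2 + 2 * n) / (4 * (2 * n - 1) * t ^ 2)

/-- The first degeneracy instant of `h_t` on `SO(2n+1)/Tⁿ`. -/
noncomputable def bB (n : ℕ) : ℝ :=
  Real.sqrt (Real.sqrt ((8 * n ^ 2 + 5 * n - 2) / 2) - 2 * n)

private lemma scalB_strictAnti {n : ℕ} (hn : 2 ≤ n) {a b : ℝ} (ha : 0 < a) (hab : a < b) :
    scalB n b < scalB n a := by
  have hx : (2:ℝ) ≤ (n:ℝ) := by exact_mod_cast hn
  have hb : 0 < b := ha.trans hab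
  set x := (n:ℝ) with hxdef
  have hx1 : (0:ℝ) < 2*x - 1 := by nlinarith
  unfold scalB
  rw [div_lt_div_iff₀ (by positivity) (by positivity)]
  have hd : 0 < b^2 - a^2 := by nlinarith
  have hp : 0 < (2*x^2-2*x)*a^2*b^2 + (5*x^3-7*x^2+2*x) := by
    have h1 : (0:ℝ) < 2*x^2-2*x := by nlinarith
    have h2 : (0:ℝ) < 5*x^3-7*x^2+2*x := by nlinarith [mul_nonneg (sub_nonneg.2 hx) (sq_nonneg x)]
    have h3 : (0:ℝ) < (2*x^2-2*x)*a^2*b^2 := by positivity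
    linarith
  nlinarith [mul_pos (mul_pos hd hp) hx1]

private lemma lt_of_scalB_lt {n : ℕ} (hn : 2 ≤ n) {a b : ℝ} (ha : 0 < a) (hb : 0 < b)
    (h : scalB n a < scalB n b) : b < a := by
  by_contra hc
  push_neg at hc
  rcases hc.eq_or_lt with h1 | h1
  · rw [h1] at h; exact lt_irrefl _ h
  · exact absurd (scalB_strictAnti hn ha h1) (not_lt.2 h.le)

/-- For `n ≥ 2`, the sequence `q ↦ t_q` of degeneracy instants of the canonical
variation on `SO(2n+1)/Tⁿ`, where `t_q ∈ (0, b_B(n)]` satisfies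
`scal_B(n,t_q)/(2n²-1) = q(q+2n-1)/(2(2n-1))`, is strictly decreasing in `q ≥ 1`
and tends to `0` as `q → ∞`. -/
theorem tB_strictAnti_tendsto_zero (n : ℕ) (hn : 2 ≤ n) (t : ℕ → ℝ)
    (ht : ∀ q : ℕ, 1 ≤ q → (0 < t q ∧ t q ≤ bB n) ∧
      scalB n (t q) / (2 * n ^ 2 - 1) = q * (q + 2 * n - 1) / (2 * (2 * n - 1))) :
    (∀ q q' : ℕ, 1 ≤ q → q < q' → t q' < t q) ∧
    Filter.Tendsto t Filter.atTop (nhds 0) := by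
  have hx : (2:ℝ) ≤ (n:ℝ) := by exact_mod_cast hn
  have hD2 : (0:ℝ) < 2*(n:ℝ)^2 - 1 := by nlinarith
  have hC : (0:ℝ) < 2*(2*(n:ℝ)-1) := by nlinarith
  have hval : ∀ q : ℕ, 1 ≤ q →
      scalB n (t q) = (q:ℝ) * ((q:ℝ) + 2*(n:ℝ) - 1) / (2*(2*(n:ℝ)-1)) * (2*(n:ℝ)^2 - 1) := by
    intro q hq
    have h := (ht q hq).2
    rw [div_eq_iff hD2.ne'] at h
    convert h using 2 <;> push_cast <;> ring
  constructor
  · intro q q' hq hqq'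
    have hq' : 1 ≤ q' := hq.trans hqq'.le
    have hqr : (q:ℝ) < (q':ℝ) := by exact_mod_cast hqq'
    have hq1r : (1:ℝ) ≤ (q:ℝ) := by exact_mod_cast hq
    have hlt : scalB n (t q) < scalB n (t q') := by
      rw [hval q hq, hval q' hq']
      have hnum : (q:ℝ) * ((q:ℝ) + 2*(n:ℝ) - 1) < (q':ℝ) * ((q':ℝ) + 2*(n:ℝ) - 1) := by
        nlinarith
      exact mul_lt_mul_of_pos_right ((div_lt_div_iff_of_pos_right hC).2 hnum) hD2
    exact lt_of_scalB_lt hn (ht q hq).1.1 (ht q' hq').1.1 hlt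
  · rw [Metric.tendsto_atTop]
    intro ε hε
    set M := scalB n ε with hM
    obtain ⟨N0, hN0⟩ := exists_nat_gt (M * (2*(2*(n:ℝ)-1)) / (2*(n:ℝ)^2-1))
    refine ⟨max 1 N0, fun q hq => ?_⟩
    have hq1 : 1 ≤ q := le_trans (le_max_left _ _) hq
    have hqN : N0 ≤ q := le_trans (le_max_right _ _) hq
    have htq := (ht q hq1).1.1
    have hq1r : (1:ℝ) ≤ (q:ℝ) := by exact_mod_cast hq1
    have hqr : M * (2*(2*(n:ℝ)-1)) / (2*(n:ℝ)^2-1) < (q:ℝ) :=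
      lt_of_lt_of_le hN0 (by exact_mod_cast hqN)
    have hMq : M * (2*(2*(n:ℝ)-1)) < (q:ℝ) * (2*(n:ℝ)^2-1) := by
      rw [div_lt_iff₀ hD2] at hqr; linarith
    have hbig : M < scalB n (t q) := by
      rw [hval q hq1, div_mul_eq_mul_div, lt_div_iff₀ hC]
      nlinarith [mul_pos (show (0:ℝ) < (q:ℝ) by linarith) hD2]
    have hlt : t q < ε := lt_of_scalB_lt hn hε htq hbig
    rw [Real.dist_eq, sub_zero, abs_of_pos htq]
    exact hlt
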